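/- arXiv:1901.03388 — 3 statements merged into one kernel-verified Lean document; each statement's English description precedes it below -/
import Mathlib

section
/- Let V be a Banach space, N a Banach manifold, E → N a smooth Banach bundle, F ⊂ E a smooth subbundle, q : E → E/F the quotient map, and θ : E/F → V an arbitrary map. If ψ = θ ∘ q is smooth, then θ is smooth. -/
open Filter Set
open scoped NNReal ENNReal Topology Nat

noncomputable section

namespace Stmt11Aux

universe u v

variable {E : Type*} [NormedAddCommGroup E] [NormedSpace ℝ E]
variable {W : Type*} [NormedAddCommGroup W] [NormedSpace ℝ W]
variable {F : Type*} [NormedAddCommGroup F] [NormedSpace ℝ F]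

theorem desc_diff {E F : Type u} [NormedAddCommGroup E] [NormedSpace ℝ E]
    [NormedAddCommGroup F] [NormedSpace ℝ F]
    {V W : Type*} [NormedAddCommGroup V] [NormedSpace ℝ V] [CompleteSpace V]
    [NormedAddCommGroup W] [NormedSpace ℝ W]
    (P : E →L[ℝ] F) (C : ℝ) (sec : F → E) (hsec1 : ∀ y, P (sec y) = y)
    (hsec2 : ∀ y, ‖sec y‖ ≤ C * ‖y‖)
    (Φ : V →L[ℝ] W) (c : ℝ) (hc : 0 ≤ c) (hΦ : ∀ v, ‖v‖ ≤ c * ‖Φ v‖) (θ : F → V) (e : E)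
    (hd : DifferentiableAt ℝ (fun x => Φ (θ (P x))) e) :
    ∃ L : F →L[ℝ] V, HasFDerivAt θ L (P e) ∧
      ∀ w, Φ (L (P w)) = fderiv ℝ (fun x => Φ (θ (P x))) e w := by
  set ψ : E → W := fun x => Φ (θ (P x)) with hψdef
  set D := fderiv ℝ ψ e with hDdef
  have hinv : ∀ x k, P k = 0 → ψ (x + k) = ψ x := by
    intro x k hk
    simp [ψ, map_add, hk]
  have hline : ∀ k : E, HasDerivAt (fun t : ℝ => ψ (e + t • k)) (D k) 0 := by
    intro k
    have hcurve : HasDerivAt (fun t : ℝ => e + t • k) k 0 := by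
      simpa using ((hasDerivAt_id (0:ℝ)).smul_const k).const_add e
    have hd0 : HasFDerivAt ψ D (e + (0:ℝ) • k) := by simpa using hd.hasFDerivAt
    exact hd0.comp_hasDerivAt (0:ℝ) hcurve
  have hker : ∀ k, P k = 0 → D k = 0 := by
    intro k hk
    have hc' := hline k
    have hconst : (fun t : ℝ => ψ (e + t • k)) = fun _ => ψ e := by
      funext t
      exact hinv e (t • k) (by simp [hk])
    rw [hconst] at hc'
    exact hc'.unique (hasDerivAt_const _ _)
  have hinj : ∀ v, Φ v = 0 → v = 0 := fun v hv => by
    have := hΦ v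
    rw [hv, norm_zero, mul_zero] at this
    exact norm_le_zero_iff.1 this
  have hcl : IsClosed (Set.range Φ) := by
    have hA : AntilipschitzWith (Real.toNNReal c) Φ :=
      ContinuousLinearMap.antilipschitz_of_bound Φ fun v =>
        (hΦ v).trans (by gcongr; exact Real.le_coe_toNNReal c)
    exact hA.isClosed_range Φ.uniformContinuous
  have hrange : ∀ w, ∃ v, Φ v = D w := by
    intro w
    have hl := hline w
    rw [hasDerivAt_iff_tendsto_slope_zero] at hl
    have hmem : D w ∈ closure (Set.range Φ) := by
      refine mem_closure_of_tendsto hl (Eventually.of_forall fun t => ?_)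
      refine ⟨t⁻¹ • (θ (P (e + (0 + t) • w)) - θ (P (e + (0:ℝ) • w))), ?_⟩
      simp [ψ, map_sub, map_smul]
    rw [hcl.closure_eq] at hmem
    exact hmem
  choose pre hpre using hrange
  have hDeq : ∀ k₁ k₂, P k₁ = P k₂ → D k₁ = D k₂ := by
    intro k₁ k₂ h
    have h' : P (k₁ - k₂) = 0 := by rw [map_sub, h, sub_self]
    have := hker _ h'
    rwa [map_sub, sub_eq_zero] at this
  let Llin : F →ₗ[ℝ] V :=
    { toFun := fun h => pre (sec h)
      map_add' := fun h1 h2 => by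
        show pre (sec (h1 + h2)) = pre (sec h1) + pre (sec h2)
        apply eq_of_sub_eq_zero
        apply hinj
        rw [map_sub, map_add, hpre, hpre, hpre, ← map_add, sub_eq_zero]
        exact hDeq _ _ (by simp [hsec1])
      map_smul' := fun r h => by
        show pre (sec (r • h)) = r • pre (sec h)
        apply eq_of_sub_eq_zero
        apply hinj
        rw [map_sub, map_smul, hpre, hpre, ← map_smul, sub_eq_zero]
        exact hDeq _ _ (by simp [hsec1]) }
  have hbound : ∀ h, ‖Llin h‖ ≤ (c * ‖D‖ * C) * ‖h‖ := by
    intro h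
    calc ‖Llin h‖ = ‖pre (sec h)‖ := rfl
      _ ≤ c * ‖Φ (pre (sec h))‖ := hΦ _
      _ = c * ‖D (sec h)‖ := by rw [hpre]
      _ ≤ c * (‖D‖ * (C * ‖h‖)) := by
          gcongr
          exact (D.le_opNorm _).trans (by gcongr; exact hsec2 h)
      _ = (c * ‖D‖ * C) * ‖h‖ := by ring
  let L : F →L[ℝ] V := Llin.mkContinuous _ hbound
  have hLapp : ∀ h, Φ (L h) = D (sec h) := fun h => hpre (sec h)
  refine ⟨L, ?_, fun w => ?_⟩
  · rw [hasFDerivAt_iff_isLittleO_nhds_zero]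
    have h1 := hasFDerivAt_iff_isLittleO_nhds_zero.1 hd.hasFDerivAt
    have hsec0 : Tendsto sec (𝓝 0) (𝓝 0) := by
      rw [tendsto_zero_iff_norm_tendsto_zero]
      refine squeeze_zero (fun _ => norm_nonneg _) (fun h => hsec2 h) ?_
      have : Tendsto (fun h : F => C * ‖h‖) (𝓝 0) (𝓝 (C * ‖(0:F)‖)) :=
        ((continuous_const.mul continuous_norm).tendsto 0)
      simpa using this
    have h2 := h1.comp_tendsto hsec0
    have h3 : (fun h : F => sec h) =O[𝓝 0] (fun h => h) :=
      Asymptotics.IsBigO.of_bound C (Eventually.of_forall fun h => hsec2 h)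
    have h4 : (fun h => ψ (e + sec h) - ψ e - D (sec h)) =o[𝓝 0] (fun h : F => h) :=
      h2.trans_isBigO h3
    refine Asymptotics.IsBigO.trans_isLittleO ?_ h4
    refine Asymptotics.IsBigO.of_bound c (Eventually.of_forall fun h => ?_)
    have : Φ (θ (P e + h) - θ (P e) - L h) = ψ (e + sec h) - ψ e - D (sec h) := by
      rw [map_sub, map_sub, hLapp]
      simp [ψ, map_add, hsec1]
    rw [← this]
    exact hΦ _
  · rw [hLapp]
    exact hDeq _ _ (hsec1 _)

theorem desc_contDiff {E F : Type u} [NormedAddCommGroup E] [NormedSpace ℝ E] [CompleteSpace E]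
    [NormedAddCommGroup F] [NormedSpace ℝ F] [CompleteSpace F]
    (P : E →L[ℝ] F) (hP : Function.Surjective P) {U : Set F} (hU : IsOpen U) (n : ℕ) :
    ∀ {V W : Type (max u v)} [NormedAddCommGroup V] [NormedSpace ℝ V] [CompleteSpace V]
      [NormedAddCommGroup W] [NormedSpace ℝ W] (Φ : V →L[ℝ] W) (c : ℝ), 0 ≤ c →
      (∀ v, ‖v‖ ≤ c * ‖Φ v‖) → ∀ θ : F → V,
      ContDiffOn ℝ ((⊤ : ℕ∞) : WithTop ℕ∞) (fun x => Φ (θ (P x))) (P ⁻¹' U) →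
      ContDiffOn ℝ n θ U := by
  obtain ⟨C, hC0, hCs⟩ := P.exists_preimage_norm_le hP
  choose sec hsec1 hsec2 using hCs
  have hopen : IsOpen (P ⁻¹' U) := hU.preimage P.continuous
  induction n with
  | zero =>
    intro V W _ _ _ _ _ Φ c hc hΦ θ hψ
    simp only [Nat.cast_zero, contDiffOn_zero]
    intro f hf
    obtain ⟨e, rfl⟩ := hP f
    have hd : DifferentiableAt ℝ (fun x => Φ (θ (P x))) e :=
      (hψ.differentiableOn (by simp)).differentiableAt (hopen.mem_nhds hf)
    obtain ⟨L, hL, -⟩ := desc_diff P C sec hsec1 hsec2 Φ c hc hΦ θ e hd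
    exact hL.continuousAt.continuousWithinAt
  | succ n ih =>
    intro V W _ _ _ _ _ Φ c hc hΦ θ hψ
    have hdiff : ∀ e ∈ P ⁻¹' U, ∃ L : F →L[ℝ] V, HasFDerivAt θ L (P e) ∧
        ∀ w, Φ (L (P w)) = fderiv ℝ (fun x => Φ (θ (P x))) e w := fun e he =>
      desc_diff P C sec hsec1 hsec2 Φ c hc hΦ θ e
        ((hψ.differentiableOn (by simp)).differentiableAt (hopen.mem_nhds he))
    rw [Nat.cast_succ, contDiffOn_succ_iff_fderiv_of_isOpen hU]
    refine ⟨?_, by simp, ?_⟩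
    · intro f hf
      obtain ⟨e, rfl⟩ := hP f
      obtain ⟨L, hL, -⟩ := hdiff e hf
      exact hL.differentiableAt.differentiableWithinAt
    · let Φ' : (F →L[ℝ] V) →L[ℝ] (E →L[ℝ] W) :=
        ((ContinuousLinearMap.compL ℝ E F W).flip P).comp (ContinuousLinearMap.compL ℝ F V W Φ)
      have hΦ'app : ∀ L : F →L[ℝ] V, ∀ w, Φ' L w = Φ (L (P w)) := fun L w => rfl
      refine ih (V := F →L[ℝ] V) (W := E →L[ℝ] W) Φ' (c * C) (by positivity) ?_
        (fderiv ℝ θ) ?_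
      · intro L
        refine L.opNorm_le_bound (by positivity) fun h => ?_
        calc ‖L h‖ ≤ c * ‖Φ (L h)‖ := hΦ _
          _ = c * ‖Φ' L (sec h)‖ := by rw [hΦ'app, hsec1]
          _ ≤ c * (‖Φ' L‖ * (C * ‖h‖)) := by
              gcongr
              exact ((Φ' L).le_opNorm _).trans (by gcongr; exact hsec2 h)
          _ = c * C * ‖Φ' L‖ * ‖h‖ := by ring
      · have hcd := ((contDiffOn_infty_iff_fderiv_of_isOpen hopen).1 hψ).2
        refine hcd.congr fun e he => ?_
        obtain ⟨L, hL, hLP⟩ := hdiff e he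
        rw [hL.fderiv]
        ext w
        rw [hΦ'app, hLP]

end Stmt11Aux

/-- let `E = N × A → N` be a smooth Banach bundle over a Banach manifold
`N` (modelled as an open subset of a Banach space `X`), `F = N × B` a subbundle
(`B ⊂ A` a closed subspace), `q : E → E/F` the fiberwise quotient map, and
`θ : E/F → V` an arbitrary map into a Banach space.  If `ψ = θ ∘ q` is smooth,
then `θ` is smooth. -/
theorem stmt11 {X A V : Type*}
    [NormedAddCommGroup X] [NormedSpace ℝ X] [CompleteSpace X]
    [NormedAddCommGroup A] [NormedSpace ℝ A] [CompleteSpace A]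
    [NormedAddCommGroup V] [NormedSpace ℝ V] [CompleteSpace V]
    (B : Submodule ℝ A) [IsClosed (B : Set A)]
    (N : Set X) (hN : IsOpen N)
    (θ : X × (A ⧸ B) → V)
    (hψ : ContDiffOn ℝ (⊤ : ℕ∞) (fun p : X × A => θ (p.1, Submodule.Quotient.mk p.2))
      (N ×ˢ (Set.univ : Set A))) :
    ContDiffOn ℝ (⊤ : ℕ∞) θ (N ×ˢ (Set.univ : Set (A ⧸ B))) := by
  classical
  -- the quotient map as a continuous linear map
  let mkQL : A →L[ℝ] A ⧸ B :=
    { toLinearMap := B.mkQ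
      cont := continuous_quot_mk }
  let P : (X × A) →L[ℝ] (X × (A ⧸ B)) := (ContinuousLinearMap.id ℝ X).prodMap mkQL
  have hPapp : ∀ q : X × A, P q = (q.1, Submodule.Quotient.mk q.2) := fun q => rfl
  have hP : Function.Surjective P := by
    rintro ⟨x, q⟩
    obtain ⟨a, rfl⟩ := Submodule.Quotient.mk_surjective B q
    exact ⟨(x, a), rfl⟩
  have hU : IsOpen ((N ×ˢ (Set.univ : Set (A ⧸ B))) : Set (X × (A ⧸ B))) :=
    hN.prod isOpen_univ
  have hpre : P ⁻¹' (N ×ˢ (Set.univ : Set (A ⧸ B))) = N ×ˢ (Set.univ : Set A) := by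
    ext q
    simp [hPapp]
  let e : ULift.{max u_1 u_2} V ≃ₗᵢ[ℝ] V := LinearIsometryEquiv.ulift ℝ V
  have hψ' : ContDiffOn ℝ ((⊤ : ℕ∞) : WithTop ℕ∞)
      (fun x => (ContinuousLinearMap.id ℝ (ULift.{max u_1 u_2} V)) (e.symm (θ (P x))))
      (P ⁻¹' (N ×ˢ (Set.univ : Set (A ⧸ B)))) := by
    rw [hpre]
    refine (e.symm.contDiff.comp_contDiffOn hψ).congr fun x _ => ?_
    simp [hPapp]
  have hθ' : ∀ n : ℕ, ContDiffOn ℝ n (fun f => e.symm (θ f)) (N ×ˢ (Set.univ : Set (A ⧸ B))) :=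
    fun n => Stmt11Aux.desc_contDiff.{max u_1 u_2, u_3} P hP hU n
      (ContinuousLinearMap.id ℝ _) 1 zero_le_one (fun v => by simp) _ hψ'
  have h2 := e.contDiff.comp_contDiffOn (contDiffOn_infty.2 hθ')
  refine h2.congr fun f _ => ?_
  simp
end
end

section
/- Let p_τ(s) = Σ_{j=0}^m a_j(τ) s^j be a family of polynomials in s ∈ ℂ of degree exactly m (a_m(τ) ≠ 0 for all τ), with coefficients a_j : [t−ε, t+ε] → ℂ smooth in τ. Then the set {s ∈ ℂ : p_τ(s) = 0 for some τ ∈ [t−ε, t+ε]} has Lebesgue measure zero in ℂ ≅ ℝ². -/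
open Set MeasureTheory Metric Module
open scoped NNReal ENNReal

section aux

variable {m : ℕ} 

/-- extended coefficient family -/
noncomputable def coA (m : ℕ) (a : Fin (m + 1) → ℝ → ℂ) : ℕ → ℝ → ℂ :=
  fun i τ => if h : i < m + 1 then a ⟨i, h⟩ τ else 0

/-- coefficients of the `j`-th derivative -/
noncomputable def coc (m : ℕ) (a : Fin (m + 1) → ℝ → ℂ) (j i : ℕ) (τ : ℝ) : ℂ :=
  ((i + j).descFactorial j : ℂ) * coA m a (i + j) τ

/-- the `j`-th derivative of the polynomial family -/
noncomputable def FF (m : ℕ) (a : Fin (m + 1) → ℝ → ℂ) (j : ℕ) (τ : ℝ) (s : ℂ) : ℂ :=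
  ∑ i ∈ Finset.range (m + 1), coc m a j i τ * s ^ i

lemma FF_zero_eq (a : Fin (m + 1) → ℝ → ℂ) (τ : ℝ) (s : ℂ) :
    FF m a 0 τ s = ∑ j : Fin (m + 1), a j τ * s ^ (j : ℕ) := by
  have : ∀ j : Fin (m + 1), a j τ * s ^ (j : ℕ) = coA m a (j : ℕ) τ * s ^ (j : ℕ) := by
    intro j
    simp [coA, j.isLt]
  rw [Finset.sum_congr rfl fun j _ => this j,
    Fin.sum_univ_eq_sum_range (fun i => coA m a i τ * s ^ i)]
  unfold FF coc
  refine Finset.sum_congr rfl fun i _ => ?_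
  simp

lemma FF_top (a : Fin (m + 1) → ℝ → ℂ) (τ : ℝ) (s : ℂ) :
    FF m a m τ s = (m.factorial : ℂ) * a (Fin.last m) τ := by
  unfold FF
  rw [Finset.sum_eq_single 0]
  · simp only [pow_zero, mul_one, coc, Nat.zero_add, Nat.descFactorial_self]
    congr 1
    simp [coA, Fin.last]
  · intro i _ hi
    have : ¬ (i + m < m + 1) := by omega
    simp [coc, coA, this]
  · simp

lemma FF_diag (a : Fin (m + 1) → ℝ → ℂ) (j : ℕ) (τ : ℝ) (s : ℂ) :
    (∑ i ∈ Finset.range (m + 1), coc m a j i τ *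
      ∑ k ∈ Finset.range i, s ^ k * s ^ (i - 1 - k)) = FF m a (j + 1) τ s := by
  have hinner : ∀ i, (∑ k ∈ Finset.range i, s ^ k * s ^ (i - 1 - k)) = (i : ℂ) * s ^ (i - 1) := by
    intro i
    have : ∀ k ∈ Finset.range i, s ^ k * s ^ (i - 1 - k) = s ^ (i - 1) := by
      intro k hk
      rw [Finset.mem_range] at hk
      rw [← pow_add]
      congr 1
      omega
    rw [Finset.sum_congr rfl this, Finset.sum_const, Finset.card_range, nsmul_eq_mul]
  simp only [hinner]
  unfold FF
  rw [Finset.sum_range_succ' (fun i => coc m a j i τ * ((i : ℂ) * s ^ (i - 1))),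
    Finset.sum_range_succ (fun i => coc m a (j + 1) i τ * s ^ i)]
  have hlast : coc m a (j + 1) m τ = 0 := by
    have : ¬ (m + (j + 1) < m + 1) := by omega
    simp [coc, coA, this]
  rw [hlast]
  simp only [Nat.cast_zero, zero_mul, mul_zero, add_zero, zero_add]
  refine Finset.sum_congr rfl fun i _ => ?_
  have hsub : i + 1 - 1 = i := rfl
  rw [hsub]
  unfold coc
  have hidx : i + 1 + j = i + (j + 1) := by omega
  rw [hidx]
  have hdf : (i + (j + 1)).descFactorial (j + 1) = (i + 1) * (i + (j + 1)).descFactorial j := by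
    rw [Nat.descFactorial_succ]
    congr 1
    omega
  rw [hdf]
  push_cast
  ring

lemma lipschitzOnWith_weaken {α β : Type*} [PseudoMetricSpace α] [PseudoMetricSpace β]
    {K K' : ℝ≥0} {f : α → β} {s : Set α} (h : LipschitzOnWith K f s) (hK : K ≤ K') :
    LipschitzOnWith K' f s := by
  apply LipschitzOnWith.of_dist_le_mul
  intro x hx y hy
  calc dist (f x) (f y) ≤ K * dist x y := h.dist_le_mul x hx y hy
    _ ≤ K' * dist x y := by
        have : (K : ℝ) ≤ K' := hK
        nlinarith [@dist_nonneg _ _ x y]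

lemma lip_of_contDiffOn {f : ℝ → ℂ} {x y : ℝ} (hf : ContDiffOn ℝ (⊤ : ℕ∞) f (Icc x y)) :
    ∃ L : ℝ≥0, LipschitzOnWith L f (Icc x y) := by
  rcases lt_trichotomy x y with h | h | h
  · have hu : UniqueDiffOn ℝ (Icc x y) := uniqueDiffOn_Icc h
    have h1 : ContDiffOn ℝ 1 f (Icc x y) := hf.of_le (by simp)
    have hd : DifferentiableOn ℝ f (Icc x y) := h1.differentiableOn one_ne_zero
    have hc : ContinuousOn (fun τ => fderivWithin ℝ f (Icc x y) τ) (Icc x y) :=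
      h1.continuousOn_fderivWithin hu le_rfl
    obtain ⟨C, hC⟩ := isCompact_Icc.exists_bound_of_continuousOn hc
    refine ⟨C.toNNReal, Convex.lipschitzOnWith_of_nnnorm_fderivWithin_le hd
      (fun z hz => ?_) (convex_Icc x y)⟩
    rw [← norm_toNNReal]
    exact Real.toNNReal_mono (hC z hz)
  · subst h
    refine ⟨1, LipschitzOnWith.of_dist_le_mul fun p hp q hq => ?_⟩
    rw [Icc_self, mem_singleton_iff] at hp hq
    subst hp; subst hq; simp
  · rw [Set.Icc_eq_empty (not_le.2 h)]
    exact ⟨1, lipschitzOnWith_empty _ _⟩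

lemma lip_const_mul {f : ℝ → ℂ} {s : Set ℝ} {L : ℝ≥0} (h : LipschitzOnWith L f s) (z : ℂ) :
    LipschitzOnWith (‖z‖₊ * L) (fun τ => z * f τ) s := by
  apply LipschitzOnWith.of_dist_le_mul
  intro p hp q hq
  have h1 : dist (z * f p) (z * f q) = ‖z‖ * dist (f p) (f q) := by
    rw [dist_eq_norm, dist_eq_norm, ← mul_sub, norm_mul]
  rw [h1]
  push_cast
  have := h.dist_le_mul p hp q hq
  nlinarith [norm_nonneg z, @dist_nonneg _ _ (f p) (f q)]

set_option maxHeartbeats 1000000 in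
/-- Main local lemma: near a simple zero, zeros form a Lipschitz curve, hence null. -/
lemma loczero {n : ℕ} {K : Set ℝ} (b : ℕ → ℝ → ℂ) {L : ℝ≥0}
    (hb : ∀ i ∈ Finset.range n, LipschitzOnWith L (b i) K)
    {τ₀ : ℝ} (hτ₀ : τ₀ ∈ K) (s₀ : ℂ)
    (hG : (∑ i ∈ Finset.range n, b i τ₀ * ∑ k ∈ Finset.range i, s₀ ^ k * s₀ ^ (i - 1 - k)) ≠ 0) :
    ∃ ρ > 0, MeasureTheory.volume
      {s : ℂ | ∃ τ ∈ K, (dist τ τ₀ < ρ ∧ dist s s₀ < ρ) ∧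
        (∑ i ∈ Finset.range n, b i τ * s ^ i) = 0} = 0 := by
  classical
  set F : ℝ → ℂ → ℂ := fun τ s => ∑ i ∈ Finset.range n, b i τ * s ^ i with hF
  set G : ℝ → ℂ → ℂ → ℂ :=
    fun τ s s' => ∑ i ∈ Finset.range n, b i τ * ∑ k ∈ Finset.range i, s ^ k * s' ^ (i - 1 - k)
    with hGdef
  have hfact : ∀ τ s s', F τ s - F τ s' = G τ s s' * (s - s') := by
    intro τ s s'
    simp only [hF, hGdef, ← Finset.sum_sub_distrib, Finset.sum_mul]
    refine Finset.sum_congr rfl fun i _ => ?_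
    rw [← mul_sub, mul_assoc, geom_sum₂_mul]
  -- continuity of G at the base point
  have hbc : ∀ i ∈ Finset.range n, ContinuousOn (b i) K := fun i hi => (hb i hi).continuousOn
  have hGc : ContinuousWithinAt (fun p : ℝ × ℂ × ℂ => G p.1 p.2.1 p.2.2)
      (K ×ˢ (univ : Set (ℂ × ℂ))) (τ₀, s₀, s₀) := by
    have : ContinuousOn (fun p : ℝ × ℂ × ℂ => G p.1 p.2.1 p.2.2) (K ×ˢ univ) := by
      apply continuousOn_finset_sum
      intro i hi
      apply ContinuousOn.mul
      · exact (hbc i hi).comp continuousOn_fst fun p hp => hp.1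
      · apply Continuous.continuousOn
        fun_prop
    exact this (τ₀, s₀, s₀) ⟨hτ₀, trivial⟩
  set c₀ : ℝ := ‖G τ₀ s₀ s₀‖ / 2 with hc₀def
  have hc₀ : 0 < c₀ := half_pos (norm_pos_iff.mpr hG)
  have hev : ∀ᶠ p in nhdsWithin ((τ₀, s₀, s₀) : ℝ × ℂ × ℂ) (K ×ˢ univ),
      c₀ < ‖G p.1 p.2.1 p.2.2‖ := by
    have hlt : c₀ < ‖G τ₀ s₀ s₀‖ := half_lt_self (norm_pos_iff.mpr hG)
    exact hGc.norm.eventually_const_lt hlt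
  rcases Metric.mem_nhdsWithin_iff.1 hev with ⟨ρ, hρ, hball⟩
  have hGlow : ∀ τ ∈ K, dist τ τ₀ < ρ → ∀ s s' : ℂ, dist s s₀ < ρ → dist s' s₀ < ρ →
      c₀ ≤ ‖G τ s s'‖ := by
    intro τ hτ hτd s s' hs hs'
    have hmem : ((τ, s, s') : ℝ × ℂ × ℂ) ∈ ball ((τ₀, s₀, s₀) : ℝ × ℂ × ℂ) ρ ∩ (K ×ˢ univ) := by
      constructor
      · rw [mem_ball]
        simp only [Prod.dist_eq]
        exact max_lt hτd (max_lt hs hs')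
      · exact ⟨hτ, trivial⟩
    exact (hball hmem).le
  -- Lipschitz estimate in τ
  set M : ℝ := ‖s₀‖ + ρ with hMdef
  have hM0 : 0 ≤ M := by positivity
  set CL : ℝ := (∑ i ∈ Finset.range n, M ^ i) * L with hCLdef
  have hCL0 : 0 ≤ CL := by positivity
  have hLip : ∀ τ ∈ K, ∀ τ' ∈ K, ∀ s : ℂ, dist s s₀ < ρ →
      ‖F τ s - F τ' s‖ ≤ CL * dist τ τ' := by
    intro τ hτ τ' hτ' s hs
    have heq : F τ s - F τ' s = ∑ i ∈ Finset.range n, (b i τ - b i τ') * s ^ i := by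
      simp only [hF, ← Finset.sum_sub_distrib, sub_mul]
    rw [heq]
    calc ‖∑ i ∈ Finset.range n, (b i τ - b i τ') * s ^ i‖
        ≤ ∑ i ∈ Finset.range n, ‖(b i τ - b i τ') * s ^ i‖ := norm_sum_le _ _
      _ ≤ ∑ i ∈ Finset.range n, M ^ i * ((L : ℝ) * dist τ τ') := by
          apply Finset.sum_le_sum
          intro i hi
          rw [norm_mul, norm_pow]
          have h1 : ‖b i τ - b i τ'‖ ≤ (L : ℝ) * dist τ τ' := by
            rw [← dist_eq_norm]
            exact (hb i hi).dist_le_mul τ hτ τ' hτ'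
          have h2 : ‖s‖ ≤ M := by
            calc ‖s‖ = ‖s₀ + (s - s₀)‖ := by ring_nf
              _ ≤ ‖s₀‖ + ‖s - s₀‖ := norm_add_le _ _
              _ ≤ ‖s₀‖ + ρ := by rw [← dist_eq_norm]; linarith
          have h3 : ‖s‖ ^ i ≤ M ^ i := pow_le_pow_left₀ (norm_nonneg _) h2 i
          have h4 : (0 : ℝ) ≤ (L : ℝ) * dist τ τ' := by positivity
          calc ‖b i τ - b i τ'‖ * ‖s‖ ^ i ≤ ((L : ℝ) * dist τ τ') * M ^ i := by
                apply mul_le_mul h1 h3 (by positivity) h4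
            _ = M ^ i * ((L : ℝ) * dist τ τ') := by ring
      _ = CL * dist τ τ' := by rw [← Finset.sum_mul, hCLdef]; ring
  -- key Lipschitz bound between zeros
  have hkey : ∀ τ ∈ K, dist τ τ₀ < ρ → ∀ τ' ∈ K, dist τ' τ₀ < ρ → ∀ s s' : ℂ,
      dist s s₀ < ρ → dist s' s₀ < ρ → F τ s = 0 → F τ' s' = 0 →
      dist s s' ≤ (CL / c₀) * dist τ τ' := by
    intro τ hτ hτd τ' hτ' hτ'd s s' hs hs' hz hz'
    have h1 : c₀ * ‖s - s'‖ ≤ ‖G τ s s'‖ * ‖s - s'‖ :=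
      mul_le_mul_of_nonneg_right (hGlow τ hτ hτd s s' hs hs') (norm_nonneg _)
    have h2 : ‖G τ s s'‖ * ‖s - s'‖ = ‖F τ s - F τ s'‖ := by
      rw [← norm_mul, ← hfact]
    have h3 : ‖F τ s - F τ s'‖ = ‖F τ s' - F τ' s'‖ := by
      rw [hz, hz']
      simp
    have h4 : ‖F τ s' - F τ' s'‖ ≤ CL * dist τ τ' := hLip τ hτ τ' hτ' s' hs'
    rw [dist_eq_norm, div_mul_eq_mul_div, le_div_iff₀ hc₀]
    rw [h2, h3] at h1
    nlinarith [h1, h4]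
  -- the Lipschitz parametrization
  set T : Set ℝ := {τ | (τ ∈ K ∧ dist τ τ₀ < ρ) ∧ ∃ s : ℂ, dist s s₀ < ρ ∧ F τ s = 0} with hTdef
  set g : ℝ → ℂ := fun τ =>
    if h : ∃ s : ℂ, dist s s₀ < ρ ∧ F τ s = 0 then h.choose else s₀ with hgdef
  have hgT : ∀ τ ∈ T, dist (g τ) s₀ < ρ ∧ F τ (g τ) = 0 := by
    intro τ hτ
    obtain ⟨-, hex⟩ := hτ
    simp only [hgdef, dif_pos hex]
    exact hex.choose_spec
  have hglip : LipschitzOnWith (CL / c₀).toNNReal g T := by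
    apply LipschitzOnWith.of_dist_le_mul
    intro p hp q hq
    obtain ⟨⟨hpK, hpd⟩, -⟩ := id hp
    obtain ⟨⟨hqK, hqd⟩, -⟩ := id hq
    obtain ⟨hgp, hgpz⟩ := hgT p hp
    obtain ⟨hgq, hgqz⟩ := hgT q hq
    have := hkey p hpK hpd q hqK hqd (g p) (g q) hgp hgq hgpz hgqz
    calc dist (g p) (g q) ≤ (CL / c₀) * dist p q := this
      _ ≤ ((CL / c₀).toNNReal : ℝ) * dist p q := by
          have : (CL / c₀) ≤ ((CL / c₀).toNNReal : ℝ) := Real.le_coe_toNNReal _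
          nlinarith [@dist_nonneg _ _ p q]
  have himg : {s : ℂ | ∃ τ ∈ K, (dist τ τ₀ < ρ ∧ dist s s₀ < ρ) ∧ F τ s = 0} = g '' T := by
    ext s
    constructor
    · rintro ⟨τ, hτK, ⟨hτd, hsd⟩, hz⟩
      have hτT : τ ∈ T := ⟨⟨hτK, hτd⟩, ⟨s, hsd, hz⟩⟩
      refine ⟨τ, hτT, ?_⟩
      obtain ⟨hgd, hgz⟩ := hgT τ hτT
      have hle := hkey τ hτK hτd τ hτK hτd (g τ) s hgd hsd hgz hz
      rw [dist_self, mul_zero] at hle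
      have : dist (g τ) s = 0 := le_antisymm hle dist_nonneg
      exact (dist_eq_zero.1 this)
    · rintro ⟨τ, hτT, rfl⟩
      obtain ⟨⟨hτK, hτd⟩, -⟩ := id hτT
      obtain ⟨hgd, hgz⟩ := hgT τ hτT
      exact ⟨τ, hτK, ⟨hτd, hgd⟩, hgz⟩
  refine ⟨ρ, hρ, ?_⟩
  have : {s : ℂ | ∃ τ ∈ K, (dist τ τ₀ < ρ ∧ dist s s₀ < ρ) ∧
      (∑ i ∈ Finset.range n, b i τ * s ^ i) = 0} = g '' T := himg
  rw [this]
  -- Lipschitz image of a 1-dimensional set is null in ℂ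
  have hdim : dimH (g '' T) < ((2 : ℝ≥0) : ℝ≥0∞) := by
    calc dimH (g '' T) ≤ dimH T := hglip.dimH_image_le
      _ ≤ dimH (univ : Set ℝ) := dimH_mono (subset_univ _)
      _ = 1 := Real.dimH_univ
      _ < ((2 : ℝ≥0) : ℝ≥0∞) := by norm_num
  have hac : (volume : Measure ℂ) ≪ μH[((2 : ℝ≥0) : ℝ)] := by
    have h2 : ((2 : ℝ≥0) : ℝ) = ((finrank ℝ ℂ : ℕ) : ℝ) := by
      rw [Complex.finrank_real_complex]; norm_num
    rw [h2]
    exact MeasureTheory.Measure.absolutelyContinuous_isAddHaarMeasure _ _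
  exact measure_zero_of_dimH_lt hac hdim

end aux

/-- if `p_τ(s) = Σ_{j=0}^m a_j(τ) s^j` is a family of polynomials of
degree exactly `m` with coefficients smooth in `τ ∈ [t−ε, t+ε]`, then the set of
`s ∈ ℂ` that are a zero of `p_τ` for some `τ` has planar Lebesgue measure zero. -/
theorem stmt14 (m : ℕ) (t ε : ℝ) (a : Fin (m + 1) → ℝ → ℂ)
    (ha : ∀ j, ContDiffOn ℝ (⊤ : ℕ∞) (a j) (Icc (t - ε) (t + ε)))
    (hdeg : ∀ τ ∈ Icc (t - ε) (t + ε), a (Fin.last m) τ ≠ 0) :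
    MeasureTheory.volume
      {s : ℂ | ∃ τ ∈ Icc (t - ε) (t + ε),
        (∑ j : Fin (m + 1), a j τ * s ^ (j : ℕ)) = 0} = 0 := by
  classical
  set K := Icc (t - ε) (t + ε) with hKdef
  have hsub : {s : ℂ | ∃ τ ∈ K, (∑ j : Fin (m + 1), a j τ * s ^ (j : ℕ)) = 0} ⊆
      ⋃ j : ℕ, {s : ℂ | ∃ τ ∈ K, FF m a j τ s = 0 ∧ FF m a (j + 1) τ s ≠ 0} := by
    rintro s ⟨τ, hτ, hzero⟩
    have h0 : FF m a 0 τ s = 0 := by rw [FF_zero_eq]; exact hzero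
    have hm : FF m a m τ s ≠ 0 := by
      rw [FF_top]
      exact mul_ne_zero (by exact_mod_cast Nat.factorial_ne_zero m) (hdeg τ hτ)
    have hex : ∃ j, FF m a j τ s ≠ 0 := ⟨m, hm⟩
    set J := Nat.find hex with hJdef
    have hJ : FF m a J τ s ≠ 0 := Nat.find_spec hex
    have hJ0 : J ≠ 0 := by
      intro h
      rw [h] at hJ
      exact hJ h0
    obtain ⟨j, hj⟩ : ∃ j, J = j + 1 := ⟨J - 1, (Nat.succ_pred_eq_of_ne_zero hJ0).symm⟩
    refine mem_iUnion.2 ⟨j, τ, hτ, ?_, by rw [← hj]; exact hJ⟩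
    have hmin := Nat.find_min hex (show j < J by omega)
    simpa using hmin
  refine measure_mono_null hsub (measure_iUnion_null fun j => ?_)
  -- obtain a uniform Lipschitz constant for the coefficients of the j-th derivative
  have hLc : ∀ i : ℕ, ∃ L : ℝ≥0, LipschitzOnWith L (coc m a j i) K := by
    intro i
    unfold coc
    rcases lt_or_ge (i + j) (m + 1) with hlt | hle
    · obtain ⟨L0, hL0⟩ := lip_of_contDiffOn (ha ⟨i + j, hlt⟩)
      refine ⟨‖((i + j).descFactorial j : ℂ)‖₊ * L0, ?_⟩
      have : (fun τ => ((i + j).descFactorial j : ℂ) * coA m a (i + j) τ)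
          = fun τ => ((i + j).descFactorial j : ℂ) * a ⟨i + j, hlt⟩ τ := by
        funext τ
        simp [coA, hlt]
      rw [hKdef, this]
      exact lip_const_mul hL0 _
    · refine ⟨1, LipschitzOnWith.of_dist_le_mul fun p hp q hq => ?_⟩
      have hn : ¬ (i + j < m + 1) := by omega
      simp only [coA, dif_neg hn, mul_zero, dist_self]
      positivity
  choose Ls hLs using hLc
  set L : ℝ≥0 := (Finset.range (m + 1)).sup Ls with hLdef
  have hb : ∀ i ∈ Finset.range (m + 1), LipschitzOnWith L (coc m a j i) K :=
    fun i hi => lipschitzOnWith_weaken (hLs i) (Finset.le_sup hi)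
  -- local neighborhoods around each point of the "simple zero" set
  set W : Set (ℝ × ℂ) :=
    {x : ℝ × ℂ | x.1 ∈ K ∧ FF m a j x.1 x.2 = 0 ∧ FF m a (j + 1) x.1 x.2 ≠ 0} with hWdef
  have hloc : ∀ x ∈ W, ∃ ρ > 0, MeasureTheory.volume
      {s : ℂ | ∃ τ ∈ K, (dist τ x.1 < ρ ∧ dist s x.2 < ρ) ∧ FF m a j τ s = 0} = 0 := by
    rintro ⟨τ₀, s₀⟩ ⟨hτ₀, hz, hnz⟩
    have hG : (∑ i ∈ Finset.range (m + 1), coc m a j i τ₀ *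
        ∑ k ∈ Finset.range i, s₀ ^ k * s₀ ^ (i - 1 - k)) ≠ 0 := by
      rw [FF_diag]
      exact hnz
    exact loczero (coc m a j) hb hτ₀ s₀ hG
  choose! ρ hρpos hρvol using hloc
  set U : ℝ × ℂ → Set (ℝ × ℂ) := fun x => Metric.ball x.1 (ρ x) ×ˢ Metric.ball x.2 (ρ x)
    with hUdef
  have hU : ∀ x ∈ W, U x ∈ nhdsWithin x W := by
    intro x hx
    apply nhdsWithin_le_nhds
    exact (isOpen_ball.prod isOpen_ball).mem_nhds
      ⟨mem_ball_self (hρpos x hx), mem_ball_self (hρpos x hx)⟩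
  obtain ⟨tset, htsub, htc, hcover⟩ := TopologicalSpace.countable_cover_nhdsWithin hU
  have hZsub : {s : ℂ | ∃ τ ∈ K, FF m a j τ s = 0 ∧ FF m a (j + 1) τ s ≠ 0} ⊆
      ⋃ x ∈ tset, {s : ℂ | ∃ τ ∈ K, (dist τ x.1 < ρ x ∧ dist s x.2 < ρ x) ∧ FF m a j τ s = 0} := by
    rintro s ⟨τ, hτ, hz, hnz⟩
    have hWmem : ((τ, s) : ℝ × ℂ) ∈ W := ⟨hτ, hz, hnz⟩
    obtain ⟨x, hx⟩ := mem_iUnion.1 (hcover hWmem)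
    obtain ⟨hxt, hxU⟩ := mem_iUnion.1 hx
    obtain ⟨hτb, hsb⟩ := hxU
    refine mem_iUnion.2 ⟨x, mem_iUnion.2 ⟨hxt, ?_⟩⟩
    exact ⟨τ, hτ, ⟨mem_ball.1 hτb, mem_ball.1 hsb⟩, hz⟩
  refine measure_mono_null hZsub ?_
  rw [measure_biUnion_null_iff htc]
  intro x hx
  exact hρvol x (htsub hx)
end

section
/- Under the hypotheses of the uniqueness theorem for spaces of geodesics (Theorem 7.5): if P ⊂ ℂTN is an involutive structure of rank ≤ m = dim M, adapted to the action of (G, S(c)) on the space N of geodesics, then at every constant geodesic u ∈ M ⊂ N, the fiber P_u equals the ℂ-linear span of {θ : θ(t) = (c̄ − t)ξ, ξ ∈ T_uM} inside ℂT_uN ≅ {affine maps [−r,r] → ℂ⊗T_uM}. In particular P_u has complex dimension exactly m and is transverse to ℂT_uM (the constant maps): P_u ∩ ℂT_uM = (0) and P_u ⊕ ℂT_uM = ℂT_uN. -/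
noncomputable section

open Set

variable {m : ℕ}

/-- Real points of `ℂ^m`: the coercion `ℝ^m → ℂ^m`. -/
def toC (u : Fin m → ℝ) : Fin m → ℂ := fun i => (u i : ℂ)


lemma toC_continuous : Continuous (toC : (Fin m → ℝ) → (Fin m → ℂ)) :=
  continuous_pi fun i => Complex.continuous_ofReal.comp (continuous_apply i)

lemma toC_zero : toC (0 : Fin m → ℝ) = 0 := by ext i; simp [toC]

lemma toC_smul (a : ℝ) (u : Fin m → ℝ) : toC (a • u) = (a : ℂ) • toC u := by
  ext i; simp [toC]

def Tmap (m : ℕ) (c : ℂ) : (Fin m → ℂ) →ₗ[ℂ] (Fin m → ℂ) × (Fin m → ℂ) :=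
  ((starRingEnd ℂ c) • LinearMap.id).prod (-LinearMap.id)

lemma Tmap_apply (c : ℂ) (z : Fin m → ℂ) :
    Tmap m c z = ((starRingEnd ℂ c) • z, -z) := rfl

lemma Tmap_inj (c : ℂ) : Function.Injective (Tmap m c) := by
  intro x y h
  have := congrArg Prod.snd h
  simpa [Tmap_apply, neg_eq_iff_eq_neg] using this

lemma span_eq_range (c : ℂ) :
    Submodule.span ℂ
        (Set.range fun ξ : Fin m → ℝ => (((starRingEnd ℂ) c) • toC ξ, -toC ξ)) =
      LinearMap.range (Tmap m c) := by
  apply le_antisymm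
  · rw [Submodule.span_le]
    rintro _ ⟨ξ, rfl⟩
    exact ⟨toC ξ, rfl⟩
  · rintro _ ⟨z, rfl⟩
    have hz : z = toC (fun i => (z i).re) + Complex.I • toC (fun i => (z i).im) := by
      ext i; simp only [toC, Pi.add_apply, Pi.smul_apply, smul_eq_mul]; rw [mul_comm]; exact (Complex.re_add_im _).symm
    rw [hz, map_add, map_smul]
    refine Submodule.add_mem _ (Submodule.subset_span ⟨_, rfl⟩)
      (Submodule.smul_mem _ _ (Submodule.subset_span ⟨_, rfl⟩))

lemma finrank_range_Tmap (c : ℂ) :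
    Module.finrank ℂ (LinearMap.range (Tmap m c)) = m := by
  rw [LinearMap.finrank_range_of_inj (Tmap_inj c), Module.finrank_fin_fun]

lemma inf_ker_eq_bot (c : ℂ) :
    LinearMap.range (Tmap m c) ⊓ LinearMap.ker (LinearMap.snd ℂ (Fin m → ℂ) (Fin m → ℂ)) = ⊥ := by
  rw [eq_bot_iff]
  rintro x ⟨⟨z, rfl⟩, hk⟩
  have hz : -z = 0 := hk
  have : z = 0 := by simpa [neg_eq_zero] using hz
  simp [this, Tmap_apply, Submodule.mem_bot]

lemma finrank_ker_snd :
    Module.finrank ℂ (LinearMap.ker (LinearMap.snd ℂ (Fin m → ℂ) (Fin m → ℂ))) = m := by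
  have h := LinearMap.finrank_range_add_finrank_ker (LinearMap.snd ℂ (Fin m → ℂ) (Fin m → ℂ))
  have hr : LinearMap.range (LinearMap.snd ℂ (Fin m → ℂ) (Fin m → ℂ)) = ⊤ :=
    LinearMap.range_eq_top.mpr (fun z => ⟨(0, z), rfl⟩)
  rw [hr, finrank_top] at h
  simp only [Module.finrank_prod, Module.finrank_fin_fun] at h
  omega

lemma sup_ker_eq_top (c : ℂ) :
    LinearMap.range (Tmap m c) ⊔ LinearMap.ker (LinearMap.snd ℂ (Fin m → ℂ) (Fin m → ℂ)) = ⊤ := by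
  apply Submodule.eq_top_of_finrank_eq
  have h := Submodule.finrank_sup_add_finrank_inf_eq (LinearMap.range (Tmap m c))
    (LinearMap.ker (LinearMap.snd ℂ (Fin m → ℂ) (Fin m → ℂ)))
  rw [inf_ker_eq_bot, finrank_range_Tmap, finrank_ker_snd, finrank_bot] at h
  simp only [Module.finrank_prod, Module.finrank_fin_fun]
  omega

set_option maxHeartbeats 1000000 in
lemma key_mem (m : ℕ) (r : ℝ) (hr : 0 < r) (c : ℂ)
    (geo : (Fin m → ℝ) × (Fin m → ℝ) → ℝ → (Fin m → ℝ))
    (hgeo : ContDiff ℝ (⊤ : ℕ∞) (fun q : ((Fin m → ℝ) × (Fin m → ℝ)) × ℝ => geo q.1 q.2))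
    (hgeo0 : ∀ p, geo p 0 = p.1)
    (hgeo1 : ∀ p, deriv (geo p) 0 = p.2)
    (N : Set ((Fin m → ℝ) × (Fin m → ℝ))) (hNopen : IsOpen N)
    (hM : ∀ u : Fin m → ℝ, (u, 0) ∈ N)
    (hGinv : ∀ p ∈ N, ∀ a b : ℝ, 0 < b → |a| + b * r ≤ r →
      (geo p a, b • deriv (geo p) a) ∈ N)
    (P : (Fin m → ℝ) × (Fin m → ℝ) → Submodule ℂ ((Fin m → ℂ) × (Fin m → ℂ)))
    (hadapt : ∀ p ∈ N, ∀ a b : ℝ, 0 < b → |a| + b * r < r →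
      ((starRingEnd ℂ) c •
          toC (fderiv ℝ (fun g : ℝ × ℝ => (geo p g.1, g.2 • deriv (geo p) g.1)) (a, b) (1, 0)).1
            - toC (fderiv ℝ (fun g : ℝ × ℝ => (geo p g.1, g.2 • deriv (geo p) g.1)) (a, b) (0, 1)).1,
        (starRingEnd ℂ) c •
          toC (fderiv ℝ (fun g : ℝ × ℝ => (geo p g.1, g.2 • deriv (geo p) g.1)) (a, b) (1, 0)).2
            - toC (fderiv ℝ (fun g : ℝ × ℝ => (geo p g.1, g.2 • deriv (geo p) g.1)) (a, b) (0, 1)).2)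
        ∈ P (geo p a, b • deriv (geo p) a))
    (hclosed : ∀ p ∈ N, ∀ w : (Fin m → ℂ) × (Fin m → ℂ),
      (p, w) ∈ closure {q : ((Fin m → ℝ) × (Fin m → ℝ)) × ((Fin m → ℂ) × (Fin m → ℂ)) |
        q.1 ∈ N ∧ q.2 ∈ P q.1} → w ∈ P p)
    (u ξ : Fin m → ℝ) :
    (((starRingEnd ℂ) c) • toC ξ, -toC ξ) ∈ P (u, 0) := by
  classical
  -- find ε > 0 with (u, ε • ξ) ∈ N
  have hcont : Continuous (fun s : ℝ => ((u, s • ξ) : (Fin m → ℝ) × (Fin m → ℝ))) := by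
    fun_prop
  have hev : ∀ᶠ s : ℝ in nhds 0, (u, s • ξ) ∈ N := by
    have h0 : (u, (0:ℝ) • ξ) ∈ N := by simpa using hM u
    exact hcont.continuousAt.eventually_mem (hNopen.mem_nhds h0)
  obtain ⟨δ, hδ, hball⟩ := Metric.eventually_nhds_iff.mp hev
  set ε : ℝ := δ / 2 with hε_def
  have hε : 0 < ε := by positivity
  have hp : ((u, ε • ξ) : (Fin m → ℝ) × (Fin m → ℝ)) ∈ N := by
    apply hball
    simp only [dist_zero_right, Real.norm_eq_abs, hε_def]
    rw [abs_of_pos (by positivity)]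
    linarith
  set p : (Fin m → ℝ) × (Fin m → ℝ) := (u, ε • ξ) with hp_def
  -- smoothness
  have hgp : ContDiff ℝ ((⊤:ℕ∞) : WithTop ℕ∞) (geo p) := by
    have : ContDiff ℝ ((⊤:ℕ∞) : WithTop ℕ∞)
        (fun q : ((Fin m → ℝ) × (Fin m → ℝ)) × ℝ => geo q.1 q.2) := hgeo.of_le (by simp)
    exact this.comp (contDiff_const.prodMk contDiff_id)
  have hdgp : ContDiff ℝ ((⊤:ℕ∞) : WithTop ℕ∞) (deriv (geo p)) :=
    (contDiff_infty_iff_deriv.mp hgp).2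
  have hF : ContDiff ℝ ((⊤:ℕ∞) : WithTop ℕ∞)
      (fun g : ℝ × ℝ => (geo p g.1, g.2 • deriv (geo p) g.1)) :=
    (hgp.comp contDiff_fst).prodMk (contDiff_snd.smul (hdgp.comp contDiff_fst))
  set F := fun g : ℝ × ℝ => (geo p g.1, g.2 • deriv (geo p) g.1) with hF_def
  set w : ℝ → (Fin m → ℂ) × (Fin m → ℂ) := fun b =>
    ((starRingEnd ℂ) c • toC (fderiv ℝ F (0, b) (1, 0)).1
        - toC (fderiv ℝ F (0, b) (0, 1)).1,
      (starRingEnd ℂ) c • toC (fderiv ℝ F (0, b) (1, 0)).2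
        - toC (fderiv ℝ F (0, b) (0, 1)).2) with hw_def
  -- continuity of w
  have hD : Continuous fun b : ℝ => fderiv ℝ F (0, b) :=
    (hF.continuous_fderiv (by simp)).comp (continuous_const.prodMk continuous_id)
  have happ : ∀ v : ℝ × ℝ, Continuous fun b : ℝ => fderiv ℝ F (0, b) v := fun v =>
    (ContinuousLinearMap.apply ℝ ((Fin m → ℝ) × (Fin m → ℝ)) v).continuous.comp hD
  have hw : Continuous w := by
    apply Continuous.prodMk
    · exact ((toC_continuous.comp (continuous_fst.comp (happ (1, 0)))).const_smul ((starRingEnd ℂ) c)).sub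
        (toC_continuous.comp (continuous_fst.comp (happ (0, 1))))
    · exact ((toC_continuous.comp (continuous_snd.comp (happ (1, 0)))).const_smul ((starRingEnd ℂ) c)).sub
        (toC_continuous.comp (continuous_snd.comp (happ (0, 1))))
  -- membership along b ∈ (0,1)
  have hmem : ∀ b ∈ Ioo (0:ℝ) 1,
      ((u, b • (ε • ξ)) ∈ N ∧ w b ∈ P (u, b • (ε • ξ))) := by
    intro b hb
    have hbr : |(0:ℝ)| + b * r ≤ r := by
      rw [abs_zero, zero_add]
      nlinarith [hb.1, hb.2]
    have hbr' : |(0:ℝ)| + b * r < r := by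
      rw [abs_zero, zero_add]
      nlinarith [hb.1, hb.2]
    have hNb := hGinv p hp 0 b hb.1 hbr
    have hPb := hadapt p hp 0 b hb.1 hbr'
    rw [hgeo0, hgeo1] at hNb hPb
    exact ⟨hNb, hPb⟩
  -- take the limit b → 0⁺
  have htend : Filter.Tendsto
      (fun b : ℝ => (((u, b • (ε • ξ)) : (Fin m → ℝ) × (Fin m → ℝ)), w b))
      (nhdsWithin 0 (Ioi 0)) (nhds (((u, (0:Fin m → ℝ)), w 0))) := by
    have h1 : Filter.Tendsto (fun b : ℝ => ((u, b • (ε • ξ)) : (Fin m → ℝ) × (Fin m → ℝ)))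
        (nhds 0) (nhds (u, 0)) := by
      have : Continuous (fun b : ℝ => ((u, b • (ε • ξ)) : (Fin m → ℝ) × (Fin m → ℝ))) := by
        fun_prop
      simpa using this.tendsto 0
    exact ((h1.prodMk_nhds (hw.continuousAt (x := 0))).mono_left nhdsWithin_le_nhds)
  have hclos : (((u, (0:Fin m → ℝ)) : (Fin m → ℝ) × (Fin m → ℝ)), w 0) ∈
      closure {q : ((Fin m → ℝ) × (Fin m → ℝ)) × ((Fin m → ℂ) × (Fin m → ℂ)) |
        q.1 ∈ N ∧ q.2 ∈ P q.1} := by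
    refine mem_closure_of_tendsto htend ?_
    filter_upwards [Ioo_mem_nhdsGT_of_mem (Set.mem_Ico.mpr ⟨le_rfl, one_pos⟩)] with b hb
    exact hmem b hb
  have hw0 : w 0 ∈ P (u, 0) := hclosed (u, 0) (hM u) (w 0) hclos
  -- compute w 0
  have hder : HasDerivAt (geo p) p.2 0 := by
    have := ((hgp.differentiable (by simp)) 0).hasDerivAt
    rwa [hgeo1] at this
  have h1 : HasFDerivAt (fun g : ℝ × ℝ => geo p g.1)
      ((ContinuousLinearMap.smulRight (1 : ℝ →L[ℝ] ℝ) p.2).comp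
        (ContinuousLinearMap.fst ℝ ℝ ℝ)) ((0:ℝ), (0:ℝ)) :=
    (hder.hasFDerivAt).comp ((0:ℝ), (0:ℝ)) hasFDerivAt_fst
  have hdh : DifferentiableAt ℝ (fun g : ℝ × ℝ => deriv (geo p) g.1) ((0:ℝ), (0:ℝ)) :=
    ((hdgp.comp contDiff_fst).differentiable (by simp)) _
  have h2 : HasFDerivAt (fun g : ℝ × ℝ => g.2 • deriv (geo p) g.1)
      ((((0:ℝ), (0:ℝ)).2 : ℝ) • fderiv ℝ (fun g : ℝ × ℝ => deriv (geo p) g.1) ((0:ℝ),(0:ℝ))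
        + (ContinuousLinearMap.snd ℝ ℝ ℝ).smulRight (deriv (geo p) ((0:ℝ),(0:ℝ)).1))
      ((0:ℝ), (0:ℝ)) :=
    (hasFDerivAt_snd (𝕜 := ℝ) (p := ((0:ℝ),(0:ℝ)))).smul hdh.hasFDerivAt
  have hFd : HasFDerivAt F _ ((0:ℝ), (0:ℝ)) := h1.prodMk h2
  have hfd := hFd.fderiv
  have e1 : fderiv ℝ F ((0:ℝ), (0:ℝ)) ((1:ℝ), (0:ℝ)) = (p.2, 0) := by
    rw [hfd]
    simp [hgeo1]
  have e2 : fderiv ℝ F ((0:ℝ), (0:ℝ)) ((0:ℝ), (1:ℝ)) = (0, p.2) := by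
    rw [hfd]
    simp [hgeo1]
  have hw0val : w 0 = (ε : ℂ) • (((starRingEnd ℂ) c) • toC ξ, -toC ξ) := by
    rw [hw_def]
    simp only [e1, e2]
    rw [toC_smul, toC_zero, Prod.smul_mk]
    congr 1
    · rw [sub_zero, smul_comm]
    · rw [smul_zero, zero_sub, smul_neg]
  have hεC : (ε : ℂ) ≠ 0 := by exact_mod_cast hε.ne'
  have := Submodule.smul_mem (P (u, 0)) (ε : ℂ)⁻¹ hw0
  rwa [hw0val, inv_smul_smul₀ hεC] at this

/-- The action of a complexified tangent vector `v` (to `ℝ^m × ℝ^m`, so `v` is a pair of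
vectors in `ℂ^m`, real and imaginary parts taken componentwise) on a map `g` into a
complex normed space: the ℂ-linear extension of the differential. -/
def cAct2 {G : Type*} [NormedAddCommGroup G] [NormedSpace ℂ G]
    (v : (Fin m → ℂ) × (Fin m → ℂ))
    (g : (Fin m → ℝ) × (Fin m → ℝ) → G) (x : (Fin m → ℝ) × (Fin m → ℝ)) : G :=
  fderiv ℝ g x ((fun i => (v.1 i).re), (fun i => (v.2 i).re))
    + Complex.I • fderiv ℝ g x ((fun i => (v.1 i).im), (fun i => (v.2 i).im))

/-- Lie bracket of complexified vector fields on `ℝ^m × ℝ^m`. -/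
def cbracket2 (w s : (Fin m → ℝ) × (Fin m → ℝ) → (Fin m → ℂ) × (Fin m → ℂ))
    (x : (Fin m → ℝ) × (Fin m → ℝ)) : (Fin m → ℂ) × (Fin m → ℂ) :=
  cAct2 (w x) s x - cAct2 (s x) w x

/-- Involutivity of a field of subspaces of the complexified tangent spaces over an
open set `N`: brackets of smooth local sections are sections. -/
def IsInvolutiveOn (N : Set ((Fin m → ℝ) × (Fin m → ℝ)))
    (P : (Fin m → ℝ) × (Fin m → ℝ) → Submodule ℂ ((Fin m → ℂ) × (Fin m → ℂ))) : Prop :=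
  ∀ U : Set ((Fin m → ℝ) × (Fin m → ℝ)), IsOpen U → U ⊆ N →
    ∀ w s : (Fin m → ℝ) × (Fin m → ℝ) → (Fin m → ℂ) × (Fin m → ℂ),
      ContDiffOn ℝ (⊤ : ℕ∞) w U → ContDiffOn ℝ (⊤ : ℕ∞) s U →
      (∀ y ∈ U, w y ∈ P y) → (∀ y ∈ U, s y ∈ P y) →
      ∀ y ∈ U, cbracket2 w s y ∈ P y

/-- under the hypotheses of Theorem 7.5, at every constant geodesic
`u ∈ M ⊂ N` the fiber `P_{(u,0)}` of an adapted involutive structure of rank `≤ m`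
equals the ℂ-span of the Jacobi fields `θ_ξ(t) = (c̄ − t) ξ`, `ξ ∈ T_u M` — a Jacobi
field along the constant geodesic `u` being an affine map, identified with the pair
(value, −derivative)... here `θ_ξ ↔ (c̄ ξ, −ξ)`; in particular `P_{(u,0)}` has complex
dimension `m` and is transverse to `ℂT_uM = {(ξ,0)} = ker snd`.

The space `N₀` of geodesics is modelled by initial data `(u,v) ∈ ℝ^m × ℝ^m` via a
geodesic flow `geo`; the monoid `G` of affine maps `g_{ab} : t ↦ a + bt`, `b > 0`,
`|a| + br ≤ r`, acts by `x·g_{ab} = x ∘ g_{ab}`, i.e. on initial data by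
`act p (a,b) = (geo p a, b • (geo p)'(a))`.  `P` is adapted to `(G, S(c))`: the
complexified differential of each orbit map sends `c̄∂_a − ∂_b` into `P`. -/
theorem stmt19 (m : ℕ) (r : ℝ) (hr : 0 < r) (c : ℂ)
    (hc : c.im ≠ 0 ∨ (c.im = 0 ∧ -r < c.re ∧ c.re < r))
    (geo : (Fin m → ℝ) × (Fin m → ℝ) → ℝ → (Fin m → ℝ))
    (hgeo : ContDiff ℝ (⊤ : ℕ∞) (fun q : ((Fin m → ℝ) × (Fin m → ℝ)) × ℝ => geo q.1 q.2))
    (hgeo0 : ∀ p, geo p 0 = p.1)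
    (hgeo1 : ∀ p, deriv (geo p) 0 = p.2)
    (hrep : ∀ p a b t, geo (geo p a, b • deriv (geo p) a) t = geo p (a + b * t))
    (N : Set ((Fin m → ℝ) × (Fin m → ℝ))) (hNopen : IsOpen N)
    (hM : ∀ u : Fin m → ℝ, (u, 0) ∈ N)
    (hGinv : ∀ p ∈ N, ∀ a b : ℝ, 0 < b → |a| + b * r ≤ r →
      (geo p a, b • deriv (geo p) a) ∈ N)
    (P : (Fin m → ℝ) × (Fin m → ℝ) → Submodule ℂ ((Fin m → ℂ) × (Fin m → ℂ)))
    (hrk : ∀ p ∈ N, Module.finrank ℂ (P p) ≤ m)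
    (hinv : IsInvolutiveOn N P)
    -- adaptedness: the pushforward of `c̄∂_a − ∂_b` under the orbit map of any
    -- `p ∈ N`, at any interior point `(a,b)` of `G`, lies in `P`
    (hadapt : ∀ p ∈ N, ∀ a b : ℝ, 0 < b → |a| + b * r < r →
      ((starRingEnd ℂ) c •
          toC (fderiv ℝ (fun g : ℝ × ℝ => (geo p g.1, g.2 • deriv (geo p) g.1)) (a, b) (1, 0)).1
            - toC (fderiv ℝ (fun g : ℝ × ℝ => (geo p g.1, g.2 • deriv (geo p) g.1)) (a, b) (0, 1)).1,
        (starRingEnd ℂ) c •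
          toC (fderiv ℝ (fun g : ℝ × ℝ => (geo p g.1, g.2 • deriv (geo p) g.1)) (a, b) (1, 0)).2
            - toC (fderiv ℝ (fun g : ℝ × ℝ => (geo p g.1, g.2 • deriv (geo p) g.1)) (a, b) (0, 1)).2)
        ∈ P (geo p a, b • deriv (geo p) a))
    -- `P` has (relatively) closed graph over `N`, as any continuous subbundle does
    (hclosed : ∀ p ∈ N, ∀ w : (Fin m → ℂ) × (Fin m → ℂ),
      (p, w) ∈ closure {q : ((Fin m → ℝ) × (Fin m → ℝ)) × ((Fin m → ℂ) × (Fin m → ℂ)) |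
        q.1 ∈ N ∧ q.2 ∈ P q.1} → w ∈ P p) :
    ∀ u : Fin m → ℝ,
      P (u, 0) = Submodule.span ℂ
          (Set.range fun ξ : Fin m → ℝ => (((starRingEnd ℂ) c) • toC ξ, -toC ξ)) ∧
      Module.finrank ℂ (P (u, 0)) = m ∧
      P (u, 0) ⊓ LinearMap.ker (LinearMap.snd ℂ (Fin m → ℂ) (Fin m → ℂ)) = ⊥ ∧
      P (u, 0) ⊔ LinearMap.ker (LinearMap.snd ℂ (Fin m → ℂ) (Fin m → ℂ)) = ⊤ := by
  
  intro u
  have hkey := key_mem m r hr c geo hgeo hgeo0 hgeo1 N hNopen hM hGinv P hadapt hclosed u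
  have hle : Submodule.span ℂ
      (Set.range fun ξ : Fin m → ℝ => (((starRingEnd ℂ) c) • toC ξ, -toC ξ)) ≤ P (u, 0) := by
    rw [Submodule.span_le]
    rintro _ ⟨ξ, rfl⟩
    exact hkey ξ
  have hfr : Module.finrank ℂ (Submodule.span ℂ
      (Set.range fun ξ : Fin m → ℝ => (((starRingEnd ℂ) c) • toC ξ, -toC ξ))) = m := by
    rw [span_eq_range, finrank_range_Tmap]
  have heq : Submodule.span ℂ
      (Set.range fun ξ : Fin m → ℝ => (((starRingEnd ℂ) c) • toC ξ, -toC ξ)) = P (u, 0) :=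
    Submodule.eq_of_le_of_finrank_le hle (by rw [hfr]; exact hrk _ (hM u))
  refine ⟨heq.symm, by rw [← heq, hfr], ?_, ?_⟩
  · rw [← heq, span_eq_range]
    exact inf_ker_eq_bot c
  · rw [← heq, span_eq_range]
    exact sup_ker_eq_top c
end
end
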